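/- Let K be a suitable convolution kernel on ℝ^d and let E₀ be locally K-outward minimizing in Ω, and set E₁ := T_K E₀. Then for every measurable G ⊆ Ω \ E₁ one has P_K(E₁ ∪ G) + S_K(G) ≥ P_K(E₁) + 2 ∫_G (K ∗ χ_{E₀ \ E₁}) dx. In particular, E₁ is also locally K-outward minimizing in Ω. -/

import Mathlib

open MeasureTheory
open scoped ENNReal

/-- The convolution of a kernel `K` with the indicator function of a set `E`. -/
noncomputable def conv {d : ℕ} (K : EuclideanSpace ℝ (Fin d) → ℝ)
    (E : Set (EuclideanSpace ℝ (Fin d))) (x : EuclideanSpace ℝ (Fin d)) : ℝ :=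
  ∫ y, K (x - y) * E.indicator (fun _ => (1 : ℝ)) y

/-- The thresholding operator `T_K E = {x | (K ∗ χ_E)(x) > 1/2}`. -/
def thresh {d : ℕ} (K : EuclideanSpace ℝ (Fin d) → ℝ)
    (E : Set (EuclideanSpace ℝ (Fin d))) : Set (EuclideanSpace ℝ (Fin d)) :=
  {x | 1 / 2 < conv K E x}

/-- The `K`-perimeter `P_K(D) = ∫_{Dᶜ} K ∗ χ_D`, as a value in `[0,∞]`. -/
noncomputable def PK {d : ℕ} (K : EuclideanSpace ℝ (Fin d) → ℝ)
    (D : Set (EuclideanSpace ℝ (Fin d))) : ℝ≥0∞ :=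
  ∫⁻ x in Dᶜ, ENNReal.ofReal (conv K D x)

/-- The self-interaction `S_K(D) = ∫_D K ∗ χ_D`, as a value in `[0,∞]`. -/
noncomputable def SK {d : ℕ} (K : EuclideanSpace ℝ (Fin d) → ℝ)
    (D : Set (EuclideanSpace ℝ (Fin d))) : ℝ≥0∞ :=
  ∫⁻ x in D, ENNReal.ofReal (conv K D x)

/-- `E₀` is locally `K`-outward minimizing in `Ω`: `E₀` is a measurable subset of `Ω` with
    finite `K`-perimeter, `Ω` is sufficiently large (`Ω ⊇ T_K E₀ ∪ E₀`), and
    `P_K(E₀ ∪ F) + S_K(F) ≥ P_K(E₀)` for all measurable `F ⊆ Ω \ E₀`. -/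
def LocallyOutwardMin {d : ℕ} (K : EuclideanSpace ℝ (Fin d) → ℝ)
    (E₀ Ω : Set (EuclideanSpace ℝ (Fin d))) : Prop :=
  MeasurableSet E₀ ∧ E₀ ⊆ Ω ∧ PK K E₀ ≠ ⊤ ∧ thresh K E₀ ∪ E₀ ⊆ Ω ∧
  ∀ F : Set (EuclideanSpace ℝ (Fin d)), MeasurableSet F → F ⊆ Ω \ E₀ →
    PK K E₀ ≤ PK K (E₀ ∪ F) + SK K F

/-!
Replace `K` by a measurable even representative `κ` (convolutions do not see null sets) and write
`L(A, B) = ∫_A ∫_B κ(x - y) dy dx`, so `P(D) = L(Dᶜ, D)` and `S(D) = L(D, D)`. As `L` is symmetric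
and `L(univ, F) = |F|`, disjoint `E`, `F` satisfy `P(E ∪ F) + S(F) + 2 L(F, E) = P(E) + |F|`.

Hence outward minimality of `E₀` means `2 L(F, E₀) ≤ |F|` for `F ⊆ Ω \ E₀`. On `F = T E₀ \ E₀`
the integrand `κ ∗ χ_{E₀}` exceeds `1/2`, so `|T E₀ \ E₀| = 0`. Off `E₁ = T E₀` it is at most `1/2`,
so `2 (L(G, E₀ \ E₁) + L(G, E₁)) = 2 L(G, E₀) ≤ |G|` for `G` disjoint from `E₁`, and the identity
for `E₁`, `G` turns this into the claimed inequality. On `E₀ \ E₁` one has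
`κ ∗ χ_{E₀} ≤ κ ∗ χ_{E₀ᶜ}`, which bounds `P(E₁) ≤ 2 P(E₀)`.
-/

open Set

theorem measure_eq_zero_of_setLIntegral_le_mul {X : Type*} [MeasurableSpace X] {μ : Measure X}
    {f : X → ℝ≥0∞} {s : Set X} {c : ℝ≥0∞} (hs : MeasurableSet s) (hf : Measurable f)
    (hlt : ∀ x ∈ s, c < f x) (hle : ∫⁻ x in s, f x ∂μ ≤ c * μ s)
    (hfin : ∫⁻ x in s, f x ∂μ ≠ ⊤) : μ s = 0 := by
  by_contra hs0
  have hc : ∫⁻ _ in s, c ∂μ ≠ ⊤ :=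
    ne_top_of_le_ne_top hfin (setLIntegral_mono hf fun x hx => (hlt x hx).le)
  have hlt' := setLIntegral_strict_mono hs hs0 hf hc (ae_of_all _ hlt)
  rw [setLIntegral_const] at hlt'
  exact (hle.trans_lt hlt').false

section Kernel

variable {X : Type*} [MeasurableSpace X] [Sub X] {μ : Measure X} {κ : X → ℝ≥0∞} {A B C : Set X}

noncomputable def setConv (κ : X → ℝ≥0∞) (μ : Measure X) (A : Set X) (x : X) : ℝ≥0∞ :=
  ∫⁻ y in A, κ (x - y) ∂μ

noncomputable def interaction (κ : X → ℝ≥0∞) (μ : Measure X) (A B : Set X) : ℝ≥0∞ :=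
  ∫⁻ x in A, setConv κ μ B x ∂μ

def threshold (κ : X → ℝ≥0∞) (μ : Measure X) (A : Set X) : Set X :=
  {x | 2⁻¹ < setConv κ μ A x}

theorem setConv_mono_ae (h : A ≤ᵐ[μ] B) (x : X) : setConv κ μ A x ≤ setConv κ μ B x :=
  lintegral_mono_set' h

theorem threshold_mono_ae (h : A ≤ᵐ[μ] B) : threshold κ μ A ⊆ threshold κ μ B :=
  fun _ hx => hx.trans_le (setConv_mono_ae h _)

theorem interaction_union_left (hd : Disjoint A B) (hB : MeasurableSet B) :
    interaction κ μ (A ∪ B) C = interaction κ μ A C + interaction κ μ B C :=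
  lintegral_union hB hd

variable [MeasurableSub₂ X] [SFinite μ]

theorem measurable_setConv (hκ : Measurable κ) : Measurable (setConv κ μ A) :=
  (hκ.comp measurable_sub).lintegral_prod_right'

theorem measurableSet_threshold (hκ : Measurable κ) : MeasurableSet (threshold κ μ A) :=
  measurableSet_lt measurable_const (measurable_setConv hκ)

theorem interaction_union_right (hκ : Measurable κ) (hd : Disjoint B C) (hC : MeasurableSet C) :
    interaction κ μ A (B ∪ C) = interaction κ μ A B + interaction κ μ A C := by
  rw [interaction, interaction, interaction, ← lintegral_add_left (measurable_setConv hκ)]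
  exact lintegral_congr fun x => lintegral_union hC hd

end Kernel

section EvenKernel

variable {X : Type*} [MeasurableSpace X] [AddGroup X] {μ : Measure X} {κ : X → ℝ≥0∞}
  {A B E F : Set X}

theorem interaction_comm [MeasurableSub₂ X] [SFinite μ] (hκ : Measurable κ)
    (hκe : ∀ x, κ (-x) = κ x) : interaction κ μ A B = interaction κ μ B A := by
  unfold interaction setConv
  rw [lintegral_lintegral_swap (f := fun x y => κ (x - y)) (hκ.comp measurable_sub).aemeasurable]
  refine lintegral_congr fun y => lintegral_congr fun x => ?_
  rw [← hκe, neg_sub]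

variable [MeasurableAdd X] [μ.IsAddRightInvariant]

theorem lintegral_sub_left_eq_of_even (hκe : ∀ x, κ (-x) = κ x) (x : X) :
    ∫⁻ y, κ (x - y) ∂μ = ∫⁻ y, κ y ∂μ := by
  simp_rw [← hκe (x - _), neg_sub]
  exact lintegral_sub_right_eq_self κ x

theorem setConv_add_setConv_compl (hκe : ∀ x, κ (-x) = κ x) (hκ1 : ∫⁻ x, κ x ∂μ = 1)
    (hA : MeasurableSet A) (x : X) : setConv κ μ A x + setConv κ μ Aᶜ x = 1 := by
  rw [setConv, setConv, lintegral_add_compl _ hA, lintegral_sub_left_eq_of_even hκe, hκ1]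

theorem setConv_le_setConv_compl (hκe : ∀ x, κ (-x) = κ x) (hκ1 : ∫⁻ x, κ x ∂μ = 1)
    (hA : MeasurableSet A) {x : X} (hx : setConv κ μ A x ≤ 2⁻¹) :
    setConv κ μ A x ≤ setConv κ μ Aᶜ x := by
  by_contra! hlt
  have hfin : setConv κ μ A x ≠ ⊤ := ne_top_of_le_ne_top (by simp) hx
  have : (1 : ℝ≥0∞) < 1 :=
    calc (1 : ℝ≥0∞) = setConv κ μ A x + setConv κ μ Aᶜ x :=
          (setConv_add_setConv_compl hκe hκ1 hA x).symm
      _ < setConv κ μ A x + setConv κ μ A x := ENNReal.add_lt_add_left hfin hlt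
      _ ≤ 2⁻¹ + 2⁻¹ := add_le_add hx hx
      _ = 1 := ENNReal.inv_two_add_inv_two
  exact this.false

variable [MeasurableSub₂ X] [SFinite μ]

theorem interaction_univ_left (hκ : Measurable κ) (hκ1 : ∫⁻ x, κ x ∂μ = 1) :
    interaction κ μ univ B = μ B := by
  unfold interaction setConv
  rw [Measure.restrict_univ,
    lintegral_lintegral_swap (f := fun x y => κ (x - y)) (hκ.comp measurable_sub).aemeasurable]
  simp_rw [lintegral_sub_right_eq_self κ, hκ1, setLIntegral_one]

theorem interaction_compl_union_add (hκ : Measurable κ) (hκe : ∀ x, κ (-x) = κ x)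
    (hκ1 : ∫⁻ x, κ x ∂μ = 1) (hE : MeasurableSet E) (hF : MeasurableSet F) (hd : Disjoint E F) :
    interaction κ μ (E ∪ F)ᶜ (E ∪ F) + interaction κ μ F F + 2 * interaction κ μ F E =
      interaction κ μ Eᶜ E + μ F := by
  have hC : Disjoint (E ∪ F)ᶜ (E ∪ F) := disjoint_compl_left
  have hEc : Eᶜ = (E ∪ F)ᶜ ∪ F := by
    rw [compl_union, ← sdiff_eq, sdiff_union_self, union_eq_left.2 hd.subset_compl_left]
  rw [hEc, interaction_union_left (hC.mono_right subset_union_right) hF,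
    ← interaction_univ_left hκ hκ1, ← compl_union_self (E ∪ F),
    interaction_union_left hC (hE.union hF), interaction_union_left hd hF,
    interaction_union_right hκ hd hF, interaction_comm (A := E) hκ hκe]
  ring

theorem le_interaction_union_iff (hκ : Measurable κ) (hκe : ∀ x, κ (-x) = κ x)
    (hκ1 : ∫⁻ x, κ x ∂μ = 1) (hE : MeasurableSet E) (hF : MeasurableSet F) (hd : Disjoint E F)
    (hfin : interaction κ μ Eᶜ E ≠ ⊤) (a : ℝ≥0∞) :
    interaction κ μ Eᶜ E + 2 * a ≤ interaction κ μ (E ∪ F)ᶜ (E ∪ F) + interaction κ μ F F ↔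
      2 * (a + interaction κ μ F E) ≤ μ F := by
  have hFE : 2 * interaction κ μ F E ≠ ⊤ := ENNReal.mul_ne_top ENNReal.ofNat_ne_top <|
    ne_top_of_le_ne_top hfin (lintegral_mono_set hd.subset_compl_left)
  rw [← ENNReal.add_le_add_iff_right hFE, interaction_compl_union_add hκ hκe hκ1 hE hF hd,
    add_assoc, ← mul_add, ENNReal.add_le_add_iff_left hfin]

end EvenKernel

section Threshold

variable {X : Type*} [MeasurableSpace X] [AddGroup X] [MeasurableAdd X] [MeasurableSub₂ X]
  {μ : Measure X} [SFinite μ] [μ.IsAddRightInvariant] {κ : X → ℝ≥0∞} {E₀ E₁ G : Set X}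

theorem threshold_ae_le (hκ : Measurable κ) (hκe : ∀ x, κ (-x) = κ x) (hκ1 : ∫⁻ x, κ x ∂μ = 1)
    (hE₀ : MeasurableSet E₀) (hfin : interaction κ μ E₀ᶜ E₀ ≠ ⊤) {Ω : Set X}
    (hTΩ : threshold κ μ E₀ ⊆ Ω)
    (hmin : ∀ F, MeasurableSet F → F ⊆ Ω \ E₀ →
      interaction κ μ E₀ᶜ E₀ ≤ interaction κ μ (E₀ ∪ F)ᶜ (E₀ ∪ F) + interaction κ μ F F) :
    threshold κ μ E₀ ≤ᵐ[μ] E₀ := by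
  set F := threshold κ μ E₀ \ E₀
  have hF : MeasurableSet F := (measurableSet_threshold hκ).diff hE₀
  have hd : Disjoint E₀ F := disjoint_sdiff_right
  have h2 : 2 * interaction κ μ F E₀ ≤ μ F := by
    simpa using (le_interaction_union_iff hκ hκe hκ1 hE₀ hF hd hfin 0).1
      (by simpa using hmin F hF (sdiff_subset_sdiff_left hTΩ))
  refine ae_le_set.2 (measure_eq_zero_of_setLIntegral_le_mul hF (measurable_setConv hκ)
    (fun x hx => hx.1) ?_ ?_)
  · exact (ENNReal.mul_le_iff_le_inv two_ne_zero ENNReal.ofNat_ne_top).1 h2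
  · exact ne_top_of_le_ne_top hfin (lintegral_mono_set hd.subset_compl_left)

theorem interaction_compl_le_of_ae_le (hκ : Measurable κ) (hκe : ∀ x, κ (-x) = κ x)
    (hκ1 : ∫⁻ x, κ x ∂μ = 1) (hE₀ : MeasurableSet E₀) (h : E₁ ≤ᵐ[μ] E₀)
    (hhalf : ∀ x ∉ E₁, setConv κ μ E₀ x ≤ 2⁻¹) :
    interaction κ μ E₁ᶜ E₁ ≤ 2 * interaction κ μ E₀ᶜ E₀ :=
  calc interaction κ μ E₁ᶜ E₁ ≤ interaction κ μ E₁ᶜ E₀ :=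
        lintegral_mono fun x => setConv_mono_ae h x
    _ = interaction κ μ (E₁ᶜ ∩ E₀ᶜ) E₀ + interaction κ μ (E₁ᶜ \ E₀ᶜ) E₀ :=
        (lintegral_inter_add_sdiff _ _ hE₀.compl).symm
    _ ≤ interaction κ μ E₀ᶜ E₀ + interaction κ μ E₀ E₀ᶜ := by
        refine add_le_add (lintegral_mono_set inter_subset_right) ?_
        refine (setLIntegral_mono (measurable_setConv hκ) fun x hx =>
          setConv_le_setConv_compl hκe hκ1 hE₀ (hhalf x hx.1)).trans (lintegral_mono_set ?_)
        rw [sdiff_compl]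
        exact inter_subset_right
    _ = 2 * interaction κ μ E₀ᶜ E₀ := by rw [interaction_comm (A := E₀) hκ hκe, two_mul]

theorem le_interaction_union_of_ae_le (hκ : Measurable κ) (hκe : ∀ x, κ (-x) = κ x)
    (hκ1 : ∫⁻ x, κ x ∂μ = 1) (hE₀ : MeasurableSet E₀) (hE₁ : MeasurableSet E₁)
    (h : E₁ ≤ᵐ[μ] E₀) (hfin : interaction κ μ E₁ᶜ E₁ ≠ ⊤) (hG : MeasurableSet G)
    (hd : Disjoint E₁ G) (hhalf : ∀ x ∈ G, setConv κ μ E₀ x ≤ 2⁻¹) :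
    interaction κ μ E₁ᶜ E₁ + 2 * interaction κ μ G (E₀ \ E₁) ≤
      interaction κ μ (E₁ ∪ G)ᶜ (E₁ ∪ G) + interaction κ μ G G := by
  rw [le_interaction_union_iff hκ hκe hκ1 hE₁ hG hd hfin,
    ENNReal.mul_le_iff_le_inv two_ne_zero ENNReal.ofNat_ne_top]
  calc interaction κ μ G (E₀ \ E₁) + interaction κ μ G E₁ = interaction κ μ G (E₁ ∪ E₀) := by
        rw [add_comm, ← interaction_union_right hκ disjoint_sdiff_right (hE₀.diff hE₁),
          union_sdiff_self]
    _ ≤ interaction κ μ G E₀ :=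
        lintegral_mono fun x => setConv_mono_ae (union_ae_eq_right.2 (ae_le_set.1 h)).le x
    _ ≤ ∫⁻ _ in G, 2⁻¹ ∂μ := setLIntegral_mono measurable_const hhalf
    _ = 2⁻¹ * μ G := setLIntegral_const _ _

end Threshold

theorem exists_measurable_even_ae_eq_ofReal {X : Type*} [MeasurableSpace X] [InvolutiveNeg X]
    [MeasurableNeg X] {μ : Measure X} [μ.IsNegInvariant] {K : X → ℝ} (hKeven : ∀ x, K (-x) = K x)
    (hK : AEMeasurable K μ) :
    ∃ κ : X → ℝ≥0∞, Measurable κ ∧ (∀ x, κ (-x) = κ x) ∧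
      κ =ᵐ[μ] fun x => ENNReal.ofReal (K x) := by
  set κ₀ := hK.ennreal_ofReal.mk
  have hκ₀ : κ₀ =ᵐ[μ] fun x => ENNReal.ofReal (K x) := hK.ennreal_ofReal.ae_eq_mk.symm
  have hκ₀neg : (κ₀ ∘ Neg.neg) =ᵐ[μ] fun x => ENNReal.ofReal (K x) := by
    filter_upwards [(Measure.measurePreserving_neg μ).quasiMeasurePreserving.ae_eq_comp hκ₀]
      with x hx
    simpa [hKeven] using hx
  refine ⟨fun x => max (κ₀ x) (κ₀ (-x)), ?_, fun x => by simp [max_comm], ?_⟩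
  · exact hK.ennreal_ofReal.measurable_mk.max (hK.ennreal_ofReal.measurable_mk.comp measurable_neg)
  · filter_upwards [hκ₀, hκ₀neg] with x h h'
    simp only [Function.comp_apply] at h'
    rw [h, h', max_self]

section Euclidean

variable {d : ℕ} {K : EuclideanSpace ℝ (Fin d) → ℝ} {κ : EuclideanSpace ℝ (Fin d) → ℝ≥0∞}
  {A : Set (EuclideanSpace ℝ (Fin d))}

theorem ofReal_conv_eq_setConv (hK0 : ∀ x, 0 ≤ K x) (hKint : Integrable K)
    (hκK : κ =ᵐ[volume] fun x => ENNReal.ofReal (K x)) (hA : MeasurableSet A)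
    (x : EuclideanSpace ℝ (Fin d)) :
    ENNReal.ofReal (conv K A x) = setConv κ volume A x := by
  have hconv : conv K A x = ∫ y in A, K (x - y) := by
    rw [conv, ← integral_indicator hA]
    congr 1 with y
    by_cases hy : y ∈ A <;> simp [hy]
  rw [hconv, ofReal_integral_eq_lintegral_ofReal (hKint.comp_sub_left x).integrableOn
    (ae_of_all _ fun y => hK0 _)]
  refine lintegral_congr_ae (ae_restrict_of_ae ?_)
  exact ((Measure.measurePreserving_sub_left volume x).quasiMeasurePreserving.ae_eq_comp hκK).symm

theorem exists_kernel_ofReal_conv_eq_setConv (hK0 : ∀ x, 0 ≤ K x)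
    (hKeven : ∀ x, K (-x) = K x) (hKint : Integrable K) (hK1 : ∫ x, K x = 1) :
    ∃ κ : EuclideanSpace ℝ (Fin d) → ℝ≥0∞, Measurable κ ∧ (∀ x, κ (-x) = κ x) ∧
      ∫⁻ x, κ x = 1 ∧
      ∀ A, MeasurableSet A → ∀ x, ENNReal.ofReal (conv K A x) = setConv κ volume A x := by
  obtain ⟨κ, hκ, hκe, hκK⟩ := exists_measurable_even_ae_eq_ofReal hKeven hKint.aemeasurable
  refine ⟨κ, hκ, hκe, ?_, fun A hA => ofReal_conv_eq_setConv hK0 hKint hκK hA⟩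
  rw [lintegral_congr_ae hκK, ← ofReal_integral_eq_lintegral_ofReal hKint (ae_of_all _ hK0), hK1,
    ENNReal.ofReal_one]

theorem thresh_eq_threshold (hconv : ∀ x, ENNReal.ofReal (conv K A x) = setConv κ volume A x) :
    thresh K A = threshold κ volume A := by
  ext x
  change 1 / 2 < conv K A x ↔ 2⁻¹ < setConv κ volume A x
  rw [← hconv, ENNReal.lt_ofReal_iff_toReal_lt (by simp)]
  norm_num

end Euclidean

/-- If `E₀` is locally `K`-outward minimizing in `Ω` and `E₁ = T_K E₀`, then for every
    measurable `G ⊆ Ω \ E₁`,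
    `P_K(E₁ ∪ G) + S_K(G) ≥ P_K(E₁) + 2 ∫_G K ∗ χ_{E₀ \ E₁}`; in particular `E₁` is also
    locally `K`-outward minimizing in `Ω`. -/
theorem thresholding_inherits_local_outward_minimality
    {d : ℕ} (K : EuclideanSpace ℝ (Fin d) → ℝ)
    (hK0 : ∀ x, 0 ≤ K x) (hKeven : ∀ x, K (-x) = K x)
    (hKint : Integrable K) (hK1 : ∫ x, K x = 1)
    (E₀ Ω : Set (EuclideanSpace ℝ (Fin d)))
    (h : LocallyOutwardMin K E₀ Ω) :
    (∀ G : Set (EuclideanSpace ℝ (Fin d)), MeasurableSet G → G ⊆ Ω \ thresh K E₀ →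
      PK K (thresh K E₀) +
          2 * ∫⁻ x in G, ENNReal.ofReal (conv K (E₀ \ thresh K E₀) x) ≤
        PK K (thresh K E₀ ∪ G) + SK K G) ∧
    LocallyOutwardMin K (thresh K E₀) Ω := by
  obtain ⟨κ, hκ, hκe, hκ1, hconv⟩ := exists_kernel_ofReal_conv_eq_setConv hK0 hKeven hKint hK1
  have hPK : ∀ D, MeasurableSet D → PK K D = interaction κ volume Dᶜ D :=
    fun D hD => lintegral_congr (hconv D hD)
  have hSK : ∀ D, MeasurableSet D → SK K D = interaction κ volume D D :=
    fun D hD => lintegral_congr (hconv D hD)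
  obtain ⟨hE₀, -, hP₀, hTΩ, hmin⟩ := h
  rw [hPK E₀ hE₀] at hP₀
  rw [thresh_eq_threshold (hconv E₀ hE₀)] at hTΩ ⊢
  set E₁ := threshold κ volume E₀
  have hE₁ : MeasurableSet E₁ := measurableSet_threshold hκ
  have hE₁Ω : E₁ ⊆ Ω := (union_subset_iff.1 hTΩ).1
  have hhalf : ∀ x ∉ E₁, setConv κ volume E₀ x ≤ 2⁻¹ := fun x hx => not_lt.1 hx
  have hE₁E₀ : E₁ ≤ᵐ[volume] E₀ :=
    threshold_ae_le hκ hκe hκ1 hE₀ hP₀ hE₁Ω fun F hF hFΩ => by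
      simpa only [hPK _ hE₀, hPK _ (hE₀.union hF), hSK _ hF] using hmin F hF hFΩ
  have hP₁ : interaction κ volume E₁ᶜ E₁ ≠ ⊤ :=
    ne_top_of_le_ne_top (ENNReal.mul_ne_top ENNReal.ofNat_ne_top hP₀)
      (interaction_compl_le_of_ae_le hκ hκe hκ1 hE₀ hE₁E₀ hhalf)
  have hineq : ∀ G, MeasurableSet G → G ⊆ Ω \ E₁ →
      PK K E₁ + 2 * ∫⁻ x in G, ENNReal.ofReal (conv K (E₀ \ E₁) x) ≤ PK K (E₁ ∪ G) + SK K G := by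
    intro G hG hGΩ
    rw [hPK _ hE₁, hPK _ (hE₁.union hG), hSK _ hG, lintegral_congr (hconv _ (hE₀.diff hE₁))]
    exact le_interaction_union_of_ae_le hκ hκe hκ1 hE₀ hE₁ hE₁E₀ hP₁ hG
      (disjoint_left.2 fun x hx hxG => (hGΩ hxG).2 hx) fun x hx => hhalf x (hGΩ hx).2
  refine ⟨hineq, hE₁, hE₁Ω, by rwa [hPK _ hE₁], ?_,
    fun G hG hGΩ => le_self_add.trans (hineq G hG hGΩ)⟩
  rw [thresh_eq_threshold (hconv E₁ hE₁)]
  exact union_subset ((threshold_mono_ae hE₁E₀).trans hE₁Ω) hE₁Ω
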